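/- arXiv:0709.2997 — 3 statements merged into one kernel-verified Lean document; each statement's English description precedes it below -/
import Mathlib

section
/- Let D be a finite design, F ⊆ D a fraction with indicator function given by interpolating polynomial f (i.e., f(ζ)=1 for ζ∈F and f(ζ)=0 for ζ∈D∖F). If I(D) = ⟨d_1,…,d_p⟩, then I(F) = ⟨d_1,…,d_p, f−1⟩. -/
/-- The vanishing ideal (design ideal) of a set of points in `k^m`. -/
def vanishingIdeal {k : Type*} [Field k] {m : ℕ} (S : Set (Fin m → k)) :
    Ideal (MvPolynomial (Fin m) k) where
  carrier := {f | ∀ ζ ∈ S, MvPolynomial.eval ζ f = 0}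
  add_mem' := fun hf hg ζ hζ => by simp [hf ζ hζ, hg ζ hζ]
  zero_mem' := fun ζ _ => by simp
  smul_mem' := fun c f hf ζ hζ => by simp [smul_eq_mul, hf ζ hζ]

/-- If `I(D) = ⟨d_1,…,d_p⟩` and `f` interpolates the indicator function of the
fraction `F ⊆ D`, then `I(F) = ⟨d_1,…,d_p, f − 1⟩`. -/
theorem stmt_5 {k : Type*} [Field k] {m : ℕ} (F D : Finset (Fin m → k)) (hFD : F ⊆ D)
    (Dgens : Set (MvPolynomial (Fin m) k))
    (hD : vanishingIdeal (D : Set (Fin m → k)) = Ideal.span Dgens)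
    (f : MvPolynomial (Fin m) k)
    (hf1 : ∀ ζ ∈ F, MvPolynomial.eval ζ f = 1)
    (hf0 : ∀ ζ ∈ D, ζ ∉ F → MvPolynomial.eval ζ f = 0) :
    vanishingIdeal (F : Set (Fin m → k)) = Ideal.span (Dgens ∪ {f - 1}) := by
  apply le_antisymm
  · intro g hg
    have hgf : g * f ∈ vanishingIdeal (D : Set (Fin m → k)) := by
      intro ζ hζ
      by_cases hζF : ζ ∈ F
      · simp [hg ζ hζF]
      · simp [hf0 ζ hζ hζF]
    rw [Ideal.span_union]
    have : g = g * f - g * (f - 1) := by ring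
    rw [this]
    exact Ideal.sub_mem _ (Ideal.mem_sup_left (hD ▸ hgf))
      (Ideal.mem_sup_right (Ideal.mul_mem_left _ g (Ideal.subset_span rfl)))
  · rw [Ideal.span_le]
    rintro g (hg | hg) ζ hζ
    · have : g ∈ vanishingIdeal (D : Set (Fin m → k)) := by
        rw [hD]; exact Ideal.subset_span hg
      exact this ζ (hFD hζ)
    · simp at hg
      subst hg
      simp [hf1 ζ hζ]
end

section
/- Let F ⊆ D be finite designs, G = {g_1,…,g_q} a Gröbner basis of I(F) w.r.t. a term ordering ≻, and let x^{α_1},…,x^{α_{N−n}} be the monomials of Est_D ∖ Est_F. For each j choose g_{i(j)} ∈ G and a monomial m_j with x^{α_j} = m_j·LT(g_{i(j)}). Then the residue classes of m_1 g_{i(1)},…,m_{N−n} g_{i(N−n)} form a k-vector-space basis of R/I(D∖F). -/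
open MvPolynomial

/-- The leading exponent of a polynomial with respect to a monomial order:
the maximum of its support. (For `f = 0` it is `0`.) -/
noncomputable def leadExp {σ : Type*} (mo : MonomialOrder σ) {k : Type*} [Field k]
    (f : MvPolynomial σ k) : σ →₀ ℕ :=
  mo.toSyn.symm (f.support.sup mo.toSyn)

/-- The leading term ideal `LT(I)`: the ideal generated by the leading monomials of
the nonzero elements of `I`. -/
noncomputable def ltIdeal {σ : Type*} (mo : MonomialOrder σ) {k : Type*} [Field k]
    (I : Ideal (MvPolynomial σ k)) : Ideal (MvPolynomial σ k) :=
  Ideal.span {p | ∃ f ∈ I, f ≠ 0 ∧ p = monomial (leadExp mo f) (1 : k)}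

/-!
A linear relation among the classes of `p_j = m_j g_{i(j)}` in `R/I(D∖F)` is a polynomial
`f = ∑ c_j p_j` vanishing on `D∖F`; it also vanishes on `F` because each `g_{i(j)}` does, hence
`f ∈ I(D)`. The leading exponents `α_j` of the `p_j` are pairwise distinct, so a nontrivial relation
has `LT(f) = x^{α_j}` for some `j`, contradicting `x^{α_j} ∉ LT(I(D))`. Thus the `N - n` classes are
independent, and they span because `R/I(D∖F) ≅ k^{D∖F}` has dimension `N - n`.
-/

namespace MonomialOrder

variable {σ : Type*} (mo : MonomialOrder σ) {k : Type*} [Field k]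

theorem leadExp_eq_degree (f : MvPolynomial σ k) : leadExp mo f = mo.degree f := rfl

theorem monomial_degree_mem_ltIdeal {I : Ideal (MvPolynomial σ k)} {f : MvPolynomial σ k}
    (hf : f ∈ I) (hf0 : f ≠ 0) : monomial (mo.degree f) (1 : k) ∈ ltIdeal mo I :=
  Ideal.subset_span ⟨f, hf, hf0, rfl⟩

theorem degree_monomial_one_mul {g : MvPolynomial σ k} (hg : g ≠ 0) (d : σ →₀ ℕ) :
    mo.degree (monomial d (1 : k) * g) = d + mo.degree g := by
  classical
  rw [mo.degree_mul (by simp) hg, mo.degree_monomial]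
  simp

theorem exists_degree_sum_smul_eq {ι : Type*} [Fintype ι] {p : ι → MvPolynomial σ k}
    (hp : ∀ i, p i ≠ 0) (hinj : Function.Injective (mo.degree ∘ p)) {c : ι → k} (hc : c ≠ 0) :
    ∃ j, ∑ i, c i • p i ≠ 0 ∧ mo.degree (∑ i, c i • p i) = mo.degree (p j) := by
  classical
  obtain ⟨j, hj, hmax⟩ := (Finset.univ.filter (c · ≠ 0)).exists_max_image
    (fun i => mo.toSyn (mo.degree (p i)))
    (by obtain ⟨i, hi⟩ := Function.ne_iff.1 hc; exact ⟨i, by simpa using hi⟩)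
  have hlt : ∀ i ≠ j, c i ≠ 0 → mo.degree (p i) ≺[mo] mo.degree (p j) := fun i hij hi =>
    lt_of_le_of_ne (hmax i (by simpa using hi)) fun h => hij (hinj (mo.toSyn.injective h))
  have hcoeff : coeff (mo.degree (p j)) (∑ i, c i • p i) = c j * mo.leadingCoeff (p j) := by
    rw [coeff_sum, Finset.sum_eq_single j]
    · simp [leadingCoeff]
    · intro i _ hij
      by_cases hi : c i = 0
      · simp [hi]
      · simp [mo.coeff_eq_zero_of_lt (hlt i hij hi)]
    · simp
  have hne : coeff (mo.degree (p j)) (∑ i, c i • p i) ≠ 0 := hcoeff ▸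
    mul_ne_zero (Finset.mem_filter.1 hj).2 (mo.leadingCoeff_ne_zero_iff.2 (hp j))
  refine ⟨j, fun h => hne (by rw [h, coeff_zero]),
    mo.toSyn.injective (le_antisymm ?_ (mo.le_degree (mem_support_iff.2 hne)))⟩
  refine mo.degree_sum_le.trans (Finset.sup_le fun i _ => ?_)
  by_cases hi : c i = 0
  · simp [hi]
  · exact mo.degree_smul_le.trans (hmax i (by simpa using hi))

theorem linearIndependent_mk_of_degree_injective {ι : Type*} [Fintype ι]
    {I J : Ideal (MvPolynomial σ k)} {p : ι → MvPolynomial σ k}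
    (hpJ : ∀ i, p i ∈ J) (hp0 : ∀ i, p i ≠ 0) (hinj : Function.Injective (mo.degree ∘ p))
    (hlt : ∀ i, monomial (mo.degree (p i)) (1 : k) ∉ ltIdeal mo (I ⊓ J)) :
    LinearIndependent k (Ideal.Quotient.mk I ∘ p) := by
  refine Fintype.linearIndependent_iff.2 fun c hc => ?_
  suffices c = 0 from fun i => congrFun this i
  by_contra hc0
  have hfI : ∑ i, c i • p i ∈ I := by
    rw [← Ideal.Quotient.eq_zero_iff_mem, ← Ideal.Quotient.mkₐ_eq_mk k, map_sum]
    simpa using hc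
  have hfJ : ∑ i, c i • p i ∈ J :=
    J.sum_mem fun i _ => Submodule.smul_of_tower_mem J (c i) (hpJ i)
  obtain ⟨j, hf0, hdeg⟩ := mo.exists_degree_sum_smul_eq hp0 hinj hc0
  exact hlt j (hdeg ▸ mo.monomial_degree_mem_ltIdeal ⟨hfI, hfJ⟩ hf0)

end MonomialOrder

section VanishingIdeal

variable {k : Type*} [Field k] {m : ℕ}

@[simp]
theorem mem_vanishingIdeal {S : Set (Fin m → k)} {f : MvPolynomial (Fin m) k} :
    f ∈ _root_.vanishingIdeal S ↔ ∀ ζ ∈ S, eval ζ f = 0 := Iff.rfl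

theorem vanishingIdeal_union (S T : Set (Fin m → k)) :
    _root_.vanishingIdeal (S ∪ T) = _root_.vanishingIdeal S ⊓ _root_.vanishingIdeal T := by
  ext f
  simp only [mem_vanishingIdeal, Set.mem_union, Submodule.mem_inf]
  exact ⟨fun h => ⟨fun ζ hζ => h ζ (.inl hζ), fun ζ hζ => h ζ (.inr hζ)⟩,
    fun h ζ hζ => hζ.elim (h.1 ζ) (h.2 ζ)⟩

theorem exists_eval_eq_one_of_ne {ζ ζ₀ : Fin m → k} (h : ζ ≠ ζ₀) :
    ∃ q : MvPolynomial (Fin m) k, eval ζ₀ q = 1 ∧ eval ζ q = 0 := by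
  obtain ⟨i, hi⟩ := Function.ne_iff.1 h
  refine ⟨C (ζ₀ i - ζ i)⁻¹ * (X i - C (ζ i)), ?_, by simp⟩
  simp [inv_mul_cancel₀ (sub_ne_zero.2 (Ne.symm hi))]

theorem exists_eval_eq_one_eval_eq_zero (S : Finset (Fin m → k)) (ζ₀ : Fin m → k) :
    ∃ p : MvPolynomial (Fin m) k, eval ζ₀ p = 1 ∧ ∀ ζ ∈ S, ζ ≠ ζ₀ → eval ζ p = 0 := by
  classical
  choose! q hq₀ hq using fun ζ (h : ζ ≠ ζ₀) => exists_eval_eq_one_of_ne h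
  refine ⟨∏ ζ ∈ S.filter (· ≠ ζ₀), q ζ, ?_, fun ζ hζ hne => ?_⟩
  · rw [map_prod]
    exact Finset.prod_eq_one fun ζ hζ => hq₀ ζ (Finset.mem_filter.1 hζ).2
  · rw [map_prod]
    exact Finset.prod_eq_zero (Finset.mem_filter.2 ⟨hζ, hne⟩) (hq ζ hne)

noncomputable def evalOn (S : Finset (Fin m → k)) : MvPolynomial (Fin m) k →ₐ[k] (S → k) :=
  AlgHom.pi fun ζ => aeval (ζ : Fin m → k)

@[simp]
theorem evalOn_apply (S : Finset (Fin m → k)) (f : MvPolynomial (Fin m) k) (ζ : S) :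
    evalOn S f ζ = eval (ζ : Fin m → k) f := by
  simp [evalOn]

theorem ker_evalOn (S : Finset (Fin m → k)) :
    RingHom.ker (evalOn S) = _root_.vanishingIdeal (S : Set (Fin m → k)) := by
  ext f
  simp [funext_iff]

theorem evalOn_surjective (S : Finset (Fin m → k)) : Function.Surjective (evalOn S) := by
  classical
  intro x
  choose p hp₀ hp using fun ζ₀ : S => exists_eval_eq_one_eval_eq_zero S (ζ₀ : Fin m → k)
  refine ⟨∑ ζ₀, C (x ζ₀) * p ζ₀, funext fun ζ => ?_⟩
  rw [evalOn_apply, map_sum, Finset.sum_eq_single ζ]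
  · simp [hp₀]
  · intro ζ₀ _ hne
    simp [hp ζ₀ ζ ζ.2 (Subtype.coe_ne_coe.2 hne.symm)]
  · simp

noncomputable def quotientVanishingIdealEquiv (S : Finset (Fin m → k)) :
    (MvPolynomial (Fin m) k ⧸ _root_.vanishingIdeal (S : Set (Fin m → k))) ≃ₐ[k] (S → k) :=
  (Ideal.quotientEquivAlgOfEq k (ker_evalOn S).symm).trans
    (Ideal.quotientKerAlgEquivOfSurjective (evalOn_surjective S))

instance (S : Finset (Fin m → k)) :
    FiniteDimensional k (MvPolynomial (Fin m) k ⧸ _root_.vanishingIdeal (S : Set (Fin m → k))) :=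
  (quotientVanishingIdealEquiv S).toLinearEquiv.symm.finiteDimensional

theorem finrank_quotient_vanishingIdeal (S : Finset (Fin m → k)) :
    Module.finrank k (MvPolynomial (Fin m) k ⧸ _root_.vanishingIdeal (S : Set (Fin m → k))) =
      S.card := by
  rw [(quotientVanishingIdealEquiv S).toLinearEquiv.finrank_eq,
    Module.finrank_fintype_fun_eq_card, Fintype.card_coe]

end VanishingIdeal

theorem stmt_10_general {k : Type*} [Field k] {v : ℕ} [DecidableEq (Fin v → k)]
    (mo : MonomialOrder (Fin v))
    (F D : Finset (Fin v → k)) (hFD : F ⊆ D)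
    (G : Finset (MvPolynomial (Fin v) k))
    (hG0 : ∀ g ∈ G, g ≠ 0)
    (hGF : ∀ g ∈ G, g ∈ _root_.vanishingIdeal (F : Set (Fin v → k)))
    (α : Fin (D.card - F.card) → (Fin v →₀ ℕ))
    (hαinj : Function.Injective α)
    (hαrange : ∀ β : Fin v →₀ ℕ, β ∈ Set.range α ↔
      (monomial β (1 : k) ∉ ltIdeal mo (_root_.vanishingIdeal (D : Set (Fin v → k))) ∧
       monomial β (1 : k) ∈ ltIdeal mo (_root_.vanishingIdeal (F : Set (Fin v → k)))))
    (gi : Fin (D.card - F.card) → MvPolynomial (Fin v) k)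
    (hgi : ∀ j, gi j ∈ G)
    (mexp : Fin (D.card - F.card) → (Fin v →₀ ℕ))
    (hm : ∀ j, α j = mexp j + leadExp mo (gi j)) :
    ∃ b : Module.Basis (Fin (D.card - F.card)) k
        (MvPolynomial (Fin v) k ⧸
          _root_.vanishingIdeal ((D \ F : Finset (Fin v → k)) : Set (Fin v → k))),
      ∀ j, b j =
        Ideal.Quotient.mk
          (_root_.vanishingIdeal ((D \ F : Finset (Fin v → k)) : Set (Fin v → k)))
          (monomial (mexp j) (1 : k) * gi j) := by
  set I := _root_.vanishingIdeal ((D \ F : Finset (Fin v → k)) : Set (Fin v → k))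
  set p := fun j => monomial (mexp j) (1 : k) * gi j
  have hdeg : ∀ j, mo.degree (p j) = α j := fun j => by
    rw [mo.degree_monomial_one_mul (hG0 _ (hgi j)), hm j, mo.leadExp_eq_degree]
  have hDF : ((D \ F : Finset (Fin v → k)) : Set (Fin v → k)) ∪ F = D := by
    rw [← Finset.coe_union, Finset.sdiff_union_of_subset hFD]
  have hli : LinearIndependent k (Ideal.Quotient.mk I ∘ p) :=
    mo.linearIndependent_mk_of_degree_injective
      (fun j => Ideal.mul_mem_left _ _ (hGF _ (hgi j)))
      (fun j => mul_ne_zero (by simp) (hG0 _ (hgi j)))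
      (by simpa [Function.comp_def, hdeg] using hαinj)
      (fun j => by
        rw [hdeg, ← vanishingIdeal_union, hDF]
        exact ((hαrange _).1 ⟨j, rfl⟩).1)
  have hcard :
      Fintype.card (Fin (D.card - F.card)) = Module.finrank k (MvPolynomial (Fin v) k ⧸ I) := by
    rw [finrank_quotient_vanishingIdeal, Finset.card_sdiff_of_subset hFD, Fintype.card_fin]
  exact ⟨basisOfLinearIndependentOfCardEqFinrank' _ hli hcard, fun j => by simp [p]⟩

/-- The residue classes of `m_j · g_{i(j)}`, for the monomials
`x^{α_j} = m_j · LT(g_{i(j)})` of `Est_D ∖ Est_F`, form a `k`-vector-space basis of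
`R/I(D∖F)`. -/
theorem stmt_10 {k : Type*} [Field k] {v : ℕ} [DecidableEq (Fin v → k)]
    (mo : MonomialOrder (Fin v))
    (F D : Finset (Fin v → k)) (hFD : F ⊆ D)
    (G : Finset (MvPolynomial (Fin v) k))
    (hG0 : ∀ g ∈ G, g ≠ 0)
    (hGF : ∀ g ∈ G, g ∈ _root_.vanishingIdeal (F : Set (Fin v → k)))
    (hGB : ltIdeal mo (_root_.vanishingIdeal (F : Set (Fin v → k))) =
      Ideal.span {p | ∃ g ∈ G, p = monomial (leadExp mo g) (1 : k)})
    (α : Fin (D.card - F.card) → (Fin v →₀ ℕ))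
    (hαinj : Function.Injective α)
    (hαrange : ∀ β : Fin v →₀ ℕ, β ∈ Set.range α ↔
      (monomial β (1 : k) ∉ ltIdeal mo (_root_.vanishingIdeal (D : Set (Fin v → k))) ∧
       monomial β (1 : k) ∈ ltIdeal mo (_root_.vanishingIdeal (F : Set (Fin v → k)))))
    (gi : Fin (D.card - F.card) → MvPolynomial (Fin v) k)
    (hgi : ∀ j, gi j ∈ G)
    (mexp : Fin (D.card - F.card) → (Fin v →₀ ℕ))
    (hm : ∀ j, α j = mexp j + leadExp mo (gi j)) :
    ∃ b : Module.Basis (Fin (D.card - F.card)) k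
        (MvPolynomial (Fin v) k ⧸
          _root_.vanishingIdeal ((D \ F : Finset (Fin v → k)) : Set (Fin v → k))),
      ∀ j, b j =
        Ideal.Quotient.mk
          (_root_.vanishingIdeal ((D \ F : Finset (Fin v → k)) : Set (Fin v → k)))
          (monomial (mexp j) (1 : k) * gi j) :=
  stmt_10_general mo F D hFD G hG0 hGF α hαinj hαrange gi hgi mexp hm
end

section
/- With notation as in the basis theorem: if a_1,…,a_{N−n} ∈ k satisfy a_1 m_1 g_{i(1)} + ⋯ + a_{N−n} m_{N−n} g_{i(N−n)} ∈ I(D∖F), then this combination lies in I(D), and consequently a_1 = ⋯ = a_{N−n} = 0. -/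
open MvPolynomial

lemma leadExp_eq_degree {σ k : Type*} [Field k] (mo : MonomialOrder σ) (f : MvPolynomial σ k) :
    leadExp mo f = mo.degree f :=
  rfl

lemma mem_vanishingIdeal_of_mem_of_mem_diff {k : Type*} [Field k] {m : ℕ}
    {S T : Set (Fin m → k)} {f : MvPolynomial (Fin m) k}
    (hS : f ∈ _root_.vanishingIdeal S) (hTS : f ∈ _root_.vanishingIdeal (T \ S)) :
    f ∈ _root_.vanishingIdeal T := by
  intro ζ hζ
  by_cases hζS : ζ ∈ S
  · exact hS ζ hζS
  · exact hTS ζ ⟨hζ, hζS⟩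

namespace MonomialOrder

variable {σ R ι : Type*} (m : MonomialOrder σ)

/-- The largest degree occurs in only one summand, so its coefficient survives in the sum. -/
theorem exists_degree_sum_eq_of_injOn [CommSemiring R] {s : Finset ι} (hs : s.Nonempty)
    {p : ι → MvPolynomial σ R} (hp : ∀ i ∈ s, p i ≠ 0)
    (hinj : Set.InjOn (fun i ↦ m.degree (p i)) s) :
    ∃ i ∈ s, m.degree (∑ j ∈ s, p j) = m.degree (p i) ∧ ∑ j ∈ s, p j ≠ 0 := by
  obtain ⟨i, hi, hmax⟩ := s.exists_max_image (fun j ↦ m.toSyn (m.degree (p j))) hs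
  have hlt : ∀ j ∈ s, j ≠ i → m.degree (p j) ≺[m] m.degree (p i) := fun j hj hji ↦
    (hmax j hj).lt_of_ne fun h ↦ hji (hinj hj hi (m.toSyn.injective h))
  have hcoeff : (∑ j ∈ s, p j).coeff (m.degree (p i)) ≠ 0 := by
    rw [coeff_sum, Finset.sum_eq_single_of_mem i hi fun j hj hji ↦
      m.coeff_eq_zero_of_lt (hlt j hj hji)]
    exact m.coeff_degree_ne_zero_iff.mpr (hp i hi)
  refine ⟨i, hi, m.toSyn.injective (le_antisymm ?_ (m.le_degree (mem_support_iff.mpr hcoeff))),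
    fun h ↦ hcoeff (by rw [h, coeff_zero])⟩
  exact m.degree_sum_le.trans (Finset.sup_le hmax)

theorem degree_C_mul_monomial_one_mul [CommSemiring R] [NoZeroDivisors R] {a : R} (ha : a ≠ 0)
    (d : σ →₀ ℕ) {g : MvPolynomial σ R} (hg : g ≠ 0) :
    m.degree (C a * (monomial d 1 * g)) = d + m.degree g := by
  classical
  have : Nontrivial R := ⟨⟨a, 0, ha⟩⟩
  have hd : (monomial d (1 : R)) ≠ 0 := (monomial_eq_zero.not).mpr one_ne_zero
  rw [m.degree_mul (C_eq_zero.not.mpr ha) (mul_ne_zero hd hg), m.degree_mul hd hg,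
    m.degree_C, m.degree_monomial, if_neg one_ne_zero, zero_add]

end MonomialOrder

theorem stmt_11_general {k : Type*} [Field k] {v : ℕ} [DecidableEq (Fin v → k)]
    (mo : MonomialOrder (Fin v))
    (F D : Finset (Fin v → k))
    (G : Finset (MvPolynomial (Fin v) k))
    (hG0 : ∀ g ∈ G, g ≠ 0)
    (hGF : ∀ g ∈ G, g ∈ _root_.vanishingIdeal (F : Set (Fin v → k)))
    (α : Fin (D.card - F.card) → (Fin v →₀ ℕ))
    (hαinj : Function.Injective α)
    (hαrange : ∀ β : Fin v →₀ ℕ, β ∈ Set.range α ↔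
      (monomial β (1 : k) ∉ ltIdeal mo (_root_.vanishingIdeal (D : Set (Fin v → k))) ∧
       monomial β (1 : k) ∈ ltIdeal mo (_root_.vanishingIdeal (F : Set (Fin v → k)))))
    (gi : Fin (D.card - F.card) → MvPolynomial (Fin v) k)
    (hgi : ∀ j, gi j ∈ G)
    (mexp : Fin (D.card - F.card) → (Fin v →₀ ℕ))
    (hm : ∀ j, α j = mexp j + leadExp mo (gi j)) :
    ∀ a : Fin (D.card - F.card) → k,
      (∑ j, C (a j) * (monomial (mexp j) (1 : k) * gi j)) ∈
          _root_.vanishingIdeal ((D \ F : Finset (Fin v → k)) : Set (Fin v → k)) →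
        (∑ j, C (a j) * (monomial (mexp j) (1 : k) * gi j)) ∈
            _root_.vanishingIdeal (D : Set (Fin v → k)) ∧
          ∀ j, a j = 0 := by
  classical
  intro a hDF
  set p := fun j ↦ C (a j) * (monomial (mexp j) (1 : k) * gi j)
  have hF : ∑ j, p j ∈ _root_.vanishingIdeal (F : Set (Fin v → k)) :=
    Ideal.sum_mem _ fun j _ ↦ Ideal.mul_mem_left _ _ (Ideal.mul_mem_left _ _ (hGF _ (hgi j)))
  have hD := mem_vanishingIdeal_of_mem_of_mem_diff hF (by rwa [← Finset.coe_sdiff])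
  refine ⟨hD, ?_⟩
  by_contra! ⟨j₀, hj₀⟩
  set s := Finset.univ.filter fun j ↦ a j ≠ 0
  have hdeg : ∀ j ∈ s, mo.degree (p j) = α j := fun j hj ↦ by
    rw [hm, mo.degree_C_mul_monomial_one_mul (Finset.mem_filter.mp hj).2 _ (hG0 _ (hgi j)),
      leadExp_eq_degree]
  have hsum : ∑ j ∈ s, p j = ∑ j, p j :=
    Finset.sum_filter_of_ne fun j _ hpj hj ↦ hpj (by simp [p, hj])
  have hp0 : ∀ j ∈ s, p j ≠ 0 := fun j hj ↦
    mul_ne_zero (C_eq_zero.not.mpr (Finset.mem_filter.mp hj).2)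
      (mul_ne_zero ((monomial_eq_zero.not).mpr one_ne_zero) (hG0 _ (hgi j)))
  have hs : s.Nonempty := ⟨j₀, by simp [s, hj₀]⟩
  obtain ⟨i, hi, hdeg_sum, hne⟩ := mo.exists_degree_sum_eq_of_injOn hs hp0
    fun j hj l hl h ↦ hαinj (by rwa [← hdeg j hj, ← hdeg l hl])
  rw [hsum] at hdeg_sum hne
  refine ((hαrange (α i)).mp ⟨i, rfl⟩).1 (Ideal.subset_span ⟨_, hD, hne, ?_⟩)
  rw [leadExp_eq_degree, hdeg_sum, hdeg i hi]

/-- Linear independence: if a combination `Σ a_j m_j g_{i(j)}` lies in `I(D∖F)`,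
then it lies in `I(D)` and all coefficients `a_j` vanish. -/
theorem stmt_11 {k : Type*} [Field k] {v : ℕ} [DecidableEq (Fin v → k)]
    (mo : MonomialOrder (Fin v))
    (F D : Finset (Fin v → k)) (hFD : F ⊆ D)
    (G : Finset (MvPolynomial (Fin v) k))
    (hG0 : ∀ g ∈ G, g ≠ 0)
    (hGF : ∀ g ∈ G, g ∈ _root_.vanishingIdeal (F : Set (Fin v → k)))
    (hGB : ltIdeal mo (_root_.vanishingIdeal (F : Set (Fin v → k))) =
      Ideal.span {p | ∃ g ∈ G, p = monomial (leadExp mo g) (1 : k)})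
    (α : Fin (D.card - F.card) → (Fin v →₀ ℕ))
    (hαinj : Function.Injective α)
    (hαrange : ∀ β : Fin v →₀ ℕ, β ∈ Set.range α ↔
      (monomial β (1 : k) ∉ ltIdeal mo (_root_.vanishingIdeal (D : Set (Fin v → k))) ∧
       monomial β (1 : k) ∈ ltIdeal mo (_root_.vanishingIdeal (F : Set (Fin v → k)))))
    (gi : Fin (D.card - F.card) → MvPolynomial (Fin v) k)
    (hgi : ∀ j, gi j ∈ G)
    (mexp : Fin (D.card - F.card) → (Fin v →₀ ℕ))
    (hm : ∀ j, α j = mexp j + leadExp mo (gi j)) :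
    ∀ a : Fin (D.card - F.card) → k,
      (∑ j, C (a j) * (monomial (mexp j) (1 : k) * gi j)) ∈
          _root_.vanishingIdeal ((D \ F : Finset (Fin v → k)) : Set (Fin v → k)) →
        (∑ j, C (a j) * (monomial (mexp j) (1 : k) * gi j)) ∈
            _root_.vanishingIdeal (D : Set (Fin v → k)) ∧
          ∀ j, a j = 0 :=
  stmt_11_general mo F D G hG0 hGF α hαinj hαrange gi hgi mexp hm
end
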